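/- arXiv:1812.00316 — 3 statements merged into one kernel-verified Lean document; each statement's English description precedes it below -/
import Mathlib

section
/- For n ≥ 1, a_n = e^{-1} M(n+1, 2, 1), where M is Kummer's confluent hypergeometric function; that is, the n-th Maclaurin coefficient of exp(z/(1-z)) equals e^{-1} ∑_{k≥0} (n+1)_k / ((2)_k k!). -/
/-!
Write `exp (z / (1 - z)) = e⁻¹ * exp (1 / (1 - z)) = e⁻¹ * (1 + ∑_k (1 - z)^{-(k+1)} / (k+1)!)`
and expand each `(1 - z)^{-(k+1)} = ∑_n C(n+k, k) z^n` by the negative binomial series. For real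
`|z| < 1` the double series converges absolutely (compare with `z = |z|`, where all terms are
nonnegative), so it may be summed over `k` first: for `n ≥ 1` the coefficient of `z^n` is
`e⁻¹ ∑_k C(n+k, k) / (k+1)!`, and `C(n+k, k) / (k+1)! = (n+1)_k / ((2)_k k!)`. Coefficients of a
power series converging on a disc are unique.
-/

open FormalMultilinearSeries
open scoped Nat NNReal

section PowerSeries

variable {𝕜 : Type*} [RCLike 𝕜]

theorem hasFPowerSeriesOnBall_ofScalars_of_hasSum {c : ℕ → 𝕜} {f : 𝕜 → 𝕜} {r : ℝ≥0}
    (hr : 0 < r) (hf : ∀ x : 𝕜, ‖x‖ < r → HasSum (fun n => c n * x ^ n) (f x)) :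
    HasFPowerSeriesOnBall f (ofScalars 𝕜 c) 0 r where
  r_le := ENNReal.le_of_forall_nnreal_lt fun ρ hρ => by
    have hρ' : ‖((ρ : ℝ) : 𝕜)‖ < r := by simpa using hρ
    refine (ofScalars 𝕜 c).le_radius_of_tendsto (l := 0) ?_
    simpa [ofScalars_norm, norm_mul, norm_pow] using (hf _ hρ').summable.tendsto_atTop_zero.norm
  r_pos := by simpa using hr
  hasSum {y} hy := by
    have hy' : ‖y‖ < r := by simpa using hy
    simpa [ofScalars_apply_eq, mul_comm] using hf y hy'

theorem eq_of_hasSum_pow_of_hasSum_pow {c d : ℕ → 𝕜} {f : 𝕜 → 𝕜} {r : ℝ≥0} (hr : 0 < r)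
    (hc : ∀ x : 𝕜, ‖x‖ < r → HasSum (fun n => c n * x ^ n) (f x))
    (hd : ∀ x : 𝕜, ‖x‖ < r → HasSum (fun n => d n * x ^ n) (f x)) : c = d :=
  ofScalars_series_injective 𝕜 𝕜 <|
    (hasFPowerSeriesOnBall_ofScalars_of_hasSum hr hc).hasFPowerSeriesAt.eq_formalMultilinearSeries
      (hasFPowerSeriesOnBall_ofScalars_of_hasSum hr hd).hasFPowerSeriesAt

end PowerSeries

theorem ascPochhammer_eval_natCast_add_one {S : Type*} [Semiring S] (n k : ℕ) :
    (ascPochhammer S k).eval ((n : S) + 1) = k ! * (n + k).choose k := by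
  rw [← Nat.cast_add_one, ascPochhammer_nat_eq_natCast_ascFactorial,
    Nat.ascFactorial_eq_factorial_mul_choose, Nat.cast_mul]

theorem ascPochhammer_eval_two {S : Type*} [Semiring S] (k : ℕ) :
    (ascPochhammer S k).eval 2 = (k + 1)! := by
  have := ascPochhammer_eval_natCast_add_one (S := S) 1 k
  rw [Nat.cast_one, one_add_one_eq_two, add_comm 1 k, Nat.choose_succ_self_right] at this
  rw [this, ← Nat.cast_mul, Nat.factorial_succ, mul_comm]

theorem ascPochhammer_eval_div_eq_choose_div_factorial {K : Type*} [Field K] [CharZero K]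
    (n k : ℕ) :
    (ascPochhammer K k).eval ((n : K) + 1) / ((ascPochhammer K k).eval 2 * k !) =
      (n + k).choose k / (k + 1)! := by
  rw [mul_comm, ascPochhammer_eval_natCast_add_one, ascPochhammer_eval_two]
  exact mul_div_mul_left _ _ (Nat.cast_ne_zero.mpr k.factorial_ne_zero : (k ! : K) ≠ 0)

namespace Real

theorem hasSum_pow_succ_div_factorial_succ (y : ℝ) :
    HasSum (fun k : ℕ => y ^ (k + 1) / (k + 1)!) (exp y - 1) := by
  have := (hasSum_nat_add_iff' (f := fun k : ℕ => y ^ k / k !) 1).mpr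
    (exp_eq_exp_ℝ ▸ NormedSpace.expSeries_div_hasSum_exp y)
  simpa using this

theorem hasSum_choose_div_factorial_mul_pow {x : ℝ} (hx : ‖x‖ < 1) (k : ℕ) :
    HasSum (fun n : ℕ => ((n + k).choose k : ℝ) / (k + 1)! * x ^ n)
      ((1 - x)⁻¹ ^ (k + 1) / (k + 1)!) := by
  simpa only [div_mul_eq_mul_div, one_div, inv_pow] using
    (hasSum_choose_mul_geometric_of_norm_lt_one k hx).div_const ((k + 1)! : ℝ)

theorem summable_choose_div_factorial_mul_pow {x : ℝ} (hx : ‖x‖ < 1) :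
    Summable fun p : ℕ × ℕ => ((p.2 + p.1).choose p.1 : ℝ) / (p.1 + 1)! * x ^ p.2 := by
  suffices Summable fun p : ℕ × ℕ => ((p.2 + p.1).choose p.1 : ℝ) / (p.1 + 1)! * ‖x‖ ^ p.2 from
    .of_norm (this.congr fun p => by simp [norm_mul, norm_div])
  have hx' : ‖‖x‖‖ < 1 := by rwa [norm_norm]
  refine (summable_prod_of_nonneg fun p => by positivity).mpr
    ⟨fun k => (hasSum_choose_div_factorial_mul_pow hx' k).summable, ?_⟩
  simp_rw [(hasSum_choose_div_factorial_mul_pow hx' _).tsum_eq]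
  exact (hasSum_pow_succ_div_factorial_succ _).summable

theorem hasSum_tsum_choose_div_factorial_mul_pow {x : ℝ} (hx : ‖x‖ < 1) :
    HasSum (fun n : ℕ => (∑' k : ℕ, ((n + k).choose k : ℝ) / (k + 1)!) * x ^ n)
      (exp (1 - x)⁻¹ - 1) := by
  have hF := summable_choose_div_factorial_mul_pow hx
  have htotal : ∑' p : ℕ × ℕ, ((p.2 + p.1).choose p.1 : ℝ) / (p.1 + 1)! * x ^ p.2 =
      exp (1 - x)⁻¹ - 1 :=
    (hF.hasSum.prod_fiberwise (hasSum_choose_div_factorial_mul_pow hx)).unique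
      (hasSum_pow_succ_div_factorial_succ _)
  rw [← htotal]
  refine ((Equiv.prodComm ℕ ℕ).hasSum_iff.mpr hF.hasSum).prod_fiberwise fun n => ?_
  rw [← tsum_mul_right]
  exact (hF.prod_symm.prod_factor n).hasSum

theorem hasSum_exp_div_one_sub {x : ℝ} (hx : ‖x‖ < 1) :
    HasSum (fun n : ℕ => (exp (-1) * ∑' k : ℕ, ((n + k).choose k : ℝ) / (k + 1)! +
        if n = 0 then exp (-1) else 0) * x ^ n) (exp (x / (1 - x))) := by
  have hconst : HasSum (fun n : ℕ => (if n = 0 then exp (-1) else 0) * x ^ n) (exp (-1)) := by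
    convert hasSum_ite_eq 0 (exp (-1)) using 2 with n
    split_ifs <;> simp_all
  have hx1 : 1 - x ≠ 0 := by
    have := (abs_lt.mp (norm_eq_abs x ▸ hx)).2
    linarith
  have hexp : exp (x / (1 - x)) = exp (-1) * (exp (1 - x)⁻¹ - 1) + exp (-1) := by
    rw [mul_sub, mul_one, sub_add_cancel, ← exp_add]
    congr 1
    field_simp
    ring
  rw [hexp]
  simpa only [add_mul, mul_assoc] using
    ((hasSum_tsum_choose_div_factorial_mul_pow hx).mul_left (exp (-1))).add hconst

end Real

/-- For `n ≥ 1`, `aₙ = e⁻¹ M(n+1, 2, 1)`, i.e. the `n`-th Maclaurin coefficient of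
`exp(z/(1-z))` equals `e⁻¹ ∑_{k≥0} (n+1)ₖ / ((2)ₖ k!)`, where `(x)ₖ` is the
Pochhammer (ascending factorial) symbol. -/
theorem stmt_4 (a : ℕ → ℝ)
    (ha : ∀ x : ℝ, |x| < 1 → HasSum (fun n => a n * x ^ n) (Real.exp (x / (1 - x)))) :
    ∀ n : ℕ, 1 ≤ n →
      a n = Real.exp (-1) *
        ∑' k : ℕ, (ascPochhammer ℝ k).eval ((n : ℝ) + 1) /
          ((ascPochhammer ℝ k).eval 2 * (k.factorial : ℝ)) := by
  have hcoeff := eq_of_hasSum_pow_of_hasSum_pow (r := 1) one_pos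
    (fun x hx => ha x (by simpa using hx))
    (fun x hx => Real.hasSum_exp_div_one_sub (by simpa using hx))
  intro n hn
  rw [congrFun hcoeff n, if_neg (by omega), add_zero]
  simp_rw [ascPochhammer_eval_div_eq_choose_div_factorial]
end

section
/- For n ≥ 1, the n-th Maclaurin coefficient b_n of f_1(z) = exp(1/(1-z)) E_1(1/(1-z)) satisfies b_n = -∫_0^1 exp(-s/(1-s)) s^{n-1} ds. -/
/-- The exponential integral `E₁(x) = ∫_x^∞ e^{-t}/t dt`. -/
noncomputable def E1 (x : ℝ) : ℝ := ∫ t in Set.Ioi x, Real.exp (-t) / t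

open MeasureTheory Real Set Filter

/-! The substitution `t = a + s/(1-s)` maps `(0,1)` onto `(a,∞)` and gives, for `a = 1/(1-x)`,
`e^a E₁(a) = ∫₀¹ e^{-s/(1-s)} (1/(1-s) - x/(1-sx)) ds`. Expanding `x/(1-sx) = ∑ sⁿ xⁿ⁺¹` and
integrating termwise (dominated by `|x|ⁿ`, since `e^{-s/(1-s)} ≤ 1-s`) exhibits a power series for
`f₁` on `|x| < 1` whose coefficient of `xⁿ⁺¹` is `-∫₀¹ e^{-s/(1-s)} sⁿ ds`; coefficients of a
power series are determined by its sum. -/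

theorem image_add_div_one_sub_Ioo (a : ℝ) :
    (fun s => a + s / (1 - s)) '' Ioo 0 1 = Ioi a := by
  ext t
  constructor
  · rintro ⟨s, ⟨hs0, hs1⟩, rfl⟩
    have : 0 < s / (1 - s) := div_pos hs0 (by linarith)
    simp only [mem_Ioi]
    linarith
  · intro ht
    have hu : 0 < t - a := sub_pos.2 ht
    refine ⟨(t - a) / (1 + (t - a)),
      ⟨by positivity, (div_lt_one (by linarith)).2 (by linarith)⟩, ?_⟩
    field_simp
    ring

theorem injOn_add_div_one_sub (a : ℝ) : InjOn (fun s => a + s / (1 - s)) (Ioo 0 1) := by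
  rintro s ⟨-, hs⟩ s' ⟨-, hs'⟩ h
  have : s / (1 - s) = s' / (1 - s') := add_left_cancel h
  rw [div_eq_div_iff (by linarith) (by linarith)] at this
  linarith

theorem hasDerivAt_add_div_one_sub (a : ℝ) {s : ℝ} (hs : s ≠ 1) :
    HasDerivAt (fun s => a + s / (1 - s)) (1 / (1 - s) ^ 2) s := by
  have hs' : 1 - s ≠ 0 := sub_ne_zero.2 hs.symm
  refine (((hasDerivAt_id' s).div ((hasDerivAt_id' s).const_sub 1) hs').const_add
    a).congr_deriv ?_
  field_simp
  ring

theorem integral_Ioi_eq_integral_Ioo (a : ℝ) (g : ℝ → ℝ) :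
    ∫ t in Ioi a, g t = ∫ s in Ioo 0 1, g (a + s / (1 - s)) / (1 - s) ^ 2 := by
  rw [← image_add_div_one_sub_Ioo a,
    integral_image_eq_integral_abs_deriv_smul measurableSet_Ioo
      (fun s hs => (hasDerivAt_add_div_one_sub a hs.2.ne).hasDerivWithinAt)
      (injOn_add_div_one_sub a)]
  refine setIntegral_congr_fun measurableSet_Ioo fun s _ => ?_
  rw [abs_of_nonneg (by positivity), smul_eq_mul, one_div_mul_eq_div]

theorem exp_mul_E1_eq_integral (a : ℝ) :
    exp a * E1 a = ∫ s in Ioo 0 1, exp (-s / (1 - s)) / ((1 - s) * (a * (1 - s) + s)) := by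
  rw [E1, ← integral_const_mul, integral_Ioi_eq_integral_Ioo]
  refine setIntegral_congr_fun measurableSet_Ioo fun s hs => ?_
  have hs' : 1 - s ≠ 0 := by linarith [hs.2]
  rw [mul_div_assoc', ← exp_add, div_div, ← sub_eq_add_neg, sub_add_cancel_left, neg_div]
  congr 1
  field_simp

theorem exp_neg_div_one_sub_le_one_sub {s : ℝ} (hs : s < 1) : exp (-s / (1 - s)) ≤ 1 - s := by
  have h1s : 0 < 1 - s := sub_pos.2 hs
  have h : 1 / (1 - s) ≤ exp (s / (1 - s)) := by
    calc 1 / (1 - s) = s / (1 - s) + 1 := by field_simp; ring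
      _ ≤ exp (s / (1 - s)) := add_one_le_exp _
  rw [neg_div, exp_neg, inv_le_comm₀ (exp_pos _) h1s, ← one_div]
  exact h

theorem integrableOn_Ioo_of_abs_le {f : ℝ → ℝ} (hf : Measurable f) {a b C : ℝ}
    (h : ∀ s ∈ Ioo a b, |f s| ≤ C) : IntegrableOn f (Ioo a b) :=
  Measure.integrableOn_of_bounded (by simp) hf.aestronglyMeasurable
    ((ae_restrict_iff' measurableSet_Ioo).2 (ae_of_all _ h))

theorem integrableOn_exp_neg_div_one_sub :
    IntegrableOn (fun s => exp (-s / (1 - s))) (Ioo 0 1) := by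
  refine integrableOn_Ioo_of_abs_le (by fun_prop) (C := 1) fun s ⟨hs0, hs1⟩ => ?_
  rw [abs_of_pos (exp_pos _)]
  linarith [exp_neg_div_one_sub_le_one_sub hs1]

theorem integrableOn_exp_neg_div_one_sub_div_one_sub :
    IntegrableOn (fun s => exp (-s / (1 - s)) / (1 - s)) (Ioo 0 1) := by
  refine integrableOn_Ioo_of_abs_le (by fun_prop) (C := 1) fun s ⟨hs0, hs1⟩ => ?_
  have h1s : 0 < 1 - s := sub_pos.2 hs1
  rw [abs_of_nonneg (by positivity), div_le_one h1s]
  exact exp_neg_div_one_sub_le_one_sub hs1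

theorem integrableOn_exp_neg_div_one_sub_div_one_sub_mul {x : ℝ} (hx : |x| < 1) :
    IntegrableOn (fun s => exp (-s / (1 - s)) / (1 - s * x)) (Ioo 0 1) := by
  refine integrableOn_Ioo_of_abs_le (by fun_prop) (C := 1 / (1 - |x|)) fun s ⟨hs0, hs1⟩ => ?_
  have hsx : 1 - |x| ≤ 1 - s * x := by
    nlinarith [neg_abs_le x, le_abs_self x]
  have hx' : 0 < 1 - |x| := sub_pos.2 hx
  rw [abs_div, abs_of_pos (exp_pos _), abs_of_pos (hx'.trans_le hsx)]
  exact div_le_div₀ zero_le_one ((exp_neg_div_one_sub_le_one_sub hs1).trans (by linarith)) hx' hsx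

theorem exp_mul_E1_one_div_one_sub {x : ℝ} (hx : |x| < 1) :
    exp (1 / (1 - x)) * E1 (1 / (1 - x)) =
      (∫ s in Ioo 0 1, exp (-s / (1 - s)) / (1 - s)) -
        x * ∫ s in Ioo 0 1, exp (-s / (1 - s)) / (1 - s * x) := by
  rw [exp_mul_E1_eq_integral, ← integral_const_mul, ← integral_sub
    integrableOn_exp_neg_div_one_sub_div_one_sub
    ((integrableOn_exp_neg_div_one_sub_div_one_sub_mul hx).const_mul x)]
  refine setIntegral_congr_fun measurableSet_Ioo fun s ⟨hs0, hs1⟩ => ?_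
  obtain ⟨hx0, hx1⟩ := abs_lt.1 hx
  have h1x : 1 - x ≠ 0 := by linarith
  have h1s : 1 - s ≠ 0 := by linarith
  have h1sx : 1 - s * x ≠ 0 := by nlinarith
  field_simp
  ring

theorem hasSum_integral_mul_pow_mul_pow {w : ℝ → ℝ} (hw : IntegrableOn w (Ioo 0 1)) {x : ℝ}
    (hx : |x| < 1) :
    HasSum (fun n => (∫ s in Ioo 0 1, w s * s ^ n) * x ^ n)
      (∫ s in Ioo 0 1, w s / (1 - s * x)) := by
  have hsx : ∀ s ∈ Ioo (0 : ℝ) 1, |s * x| < 1 := fun s ⟨hs0, hs1⟩ => by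
    rw [abs_mul, abs_of_pos hs0]
    nlinarith [abs_nonneg x]
  simp_rw [← integral_mul_const]
  refine hasSum_integral_of_dominated_convergence (fun n s => ‖w s‖ * |x| ^ n)
    (fun n => (hw.aestronglyMeasurable.mul (by fun_prop)).mul_const _) (fun n => ?_)
    (ae_of_all _ fun s => (summable_geometric_of_lt_one (abs_nonneg x) hx).mul_left _) ?_ ?_
  · refine (ae_restrict_iff' measurableSet_Ioo).2 (ae_of_all _ fun s ⟨hs0, hs1⟩ => ?_)
    rw [norm_mul, norm_mul, mul_assoc, norm_pow, norm_pow, Real.norm_eq_abs, Real.norm_eq_abs,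
      abs_of_pos hs0]
    gcongr
    exact mul_le_of_le_one_left (by positivity) (pow_le_one₀ hs0.le hs1.le)
  · simp_rw [tsum_mul_left]
    exact hw.norm.mul_const _
  · refine (ae_restrict_iff' measurableSet_Ioo).2 (ae_of_all _ fun s hs => ?_)
    simpa [div_eq_mul_inv, mul_assoc, mul_pow] using
      (hasSum_geometric_of_abs_lt_one (hsx s hs)).mul_left (w s)

noncomputable def expE1Coeff : ℕ → ℝ
  | 0 => ∫ s in Ioo 0 1, exp (-s / (1 - s)) / (1 - s)
  | n + 1 => -∫ s in Ioo 0 1, exp (-s / (1 - s)) * s ^ n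

theorem hasSum_expE1Coeff {x : ℝ} (hx : |x| < 1) :
    HasSum (fun n => expE1Coeff n * x ^ n) (exp (1 / (1 - x)) * E1 (1 / (1 - x))) := by
  have hsucc : HasSum (fun n => expE1Coeff (n + 1) * x ^ (n + 1))
      (-x * ∫ s in Ioo 0 1, exp (-s / (1 - s)) / (1 - s * x)) := by
    refine ((hasSum_integral_mul_pow_mul_pow integrableOn_exp_neg_div_one_sub hx).mul_left
      (-x)).congr_fun fun n => ?_
    rw [expE1Coeff, pow_succ]
    ring
  have hzero : expE1Coeff 0 * x ^ 0 = ∫ s in Ioo 0 1, exp (-s / (1 - s)) / (1 - s) := by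
    rw [expE1Coeff, pow_zero, mul_one]
  rw [exp_mul_E1_one_div_one_sub hx, sub_eq_add_neg, ← neg_mul, ← hzero]
  exact hsucc.zero_add

theorem hasFPowerSeriesOnBall_ofScalars_of_hasSum_s5 {c : ℕ → ℝ} {g : ℝ → ℝ} {r : NNReal}
    (hr : 0 < r) (h : ∀ x : ℝ, |x| < r → HasSum (fun n => c n * x ^ n) (g x)) :
    HasFPowerSeriesOnBall g (FormalMultilinearSeries.ofScalars ℝ c) 0 r := by
  refine ⟨ENNReal.le_of_forall_nnreal_lt fun ρ hρ => ?_, by exact_mod_cast hr, fun {y} hy => ?_⟩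
  · refine FormalMultilinearSeries.le_radius_of_tendsto _ (l := 0) ?_
    have hρ' : |(ρ : ℝ)| < r := by rw [NNReal.abs_eq]; exact_mod_cast hρ
    simpa [FormalMultilinearSeries.ofScalars_norm, abs_mul] using
      (h ρ hρ').summable.tendsto_atTop_zero.abs
  · have hy' : |y| < r := by simpa using hy
    simpa [FormalMultilinearSeries.ofScalars_apply_eq, mul_comm] using h y hy'

theorem eq_of_hasSum_mul_pow {b c : ℕ → ℝ} {g : ℝ → ℝ} {r : NNReal} (hr : 0 < r)
    (hb : ∀ x : ℝ, |x| < r → HasSum (fun n => b n * x ^ n) (g x))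
    (hc : ∀ x : ℝ, |x| < r → HasSum (fun n => c n * x ^ n) (g x)) : b = c :=
  FormalMultilinearSeries.ofScalars_series_injective ℝ ℝ <|
    (hasFPowerSeriesOnBall_ofScalars_of_hasSum_s5 hr hb).hasFPowerSeriesAt.eq_formalMultilinearSeries
      (hasFPowerSeriesOnBall_ofScalars_of_hasSum_s5 hr hc).hasFPowerSeriesAt

/-- For `n ≥ 1`, the `n`-th Maclaurin coefficient `bₙ` of
`f₁(z) = exp(1/(1-z)) E₁(1/(1-z))` satisfies `bₙ = -∫₀¹ exp(-s/(1-s)) s^{n-1} ds`. -/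
theorem stmt_5 (b : ℕ → ℝ)
    (hb : ∀ x : ℝ, |x| < 1 → HasSum (fun n => b n * x ^ n)
      (Real.exp (1 / (1 - x)) * E1 (1 / (1 - x)))) :
    ∀ n : ℕ, 1 ≤ n →
      b n = -∫ s in (0 : ℝ)..1, Real.exp (-s / (1 - s)) * s ^ (n - 1) := by
  have hcoeff : b = expE1Coeff :=
    eq_of_hasSum_mul_pow (r := 1) one_pos (by simpa using hb)
      (by simpa using fun x (hx : |x| < 1) => hasSum_expE1Coeff hx)
  rintro (_ | n) hn
  · cases hn
  rw [hcoeff, intervalIntegral.integral_of_le zero_le_one, integral_Ioc_eq_integral_Ioo]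
  rfl
end

section
/- For n ≥ 1, b_n = a_n·G - a_n', where G = e·E_1(1) is the Euler-Gompertz constant, a_n = [z^n] exp(z/(1-z)), and the sequence a_n' is defined by a_0' = 0, a_1' = 1, and n·a_n' - (2n-1)·a_{n-1}' + (n-2)·a_{n-2}' equals -1 for n = 2 and 0 for n ≥ 3. -/
/-!
Put `G = e·E₁(1)`, `F(x) = e^{1/(1-x)} E₁(1/(1-x))` and `A(x) = e^{x/(1-x)}`. Since
`(e^y E₁(y))' = e^y E₁(y) - 1/y`, the function `H = F - G·A` solves
`(1-x)² H' = H - (1-x)` on `(-1, 1)`, and `H(0) = F(0) - G = 0`. Comparing coefficients of the power series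
`H = ∑ (bₙ - G aₙ) xⁿ` turns the differential equation into the second-order recurrence that
defines `-aₙ'`, with the same initial values, so `bₙ - G aₙ = -aₙ'`.
-/

open MeasureTheory Set Real PowerSeries

theorem integrableOn_exp_neg_div_Ioi {x : ℝ} (hx : 0 < x) :
    IntegrableOn (fun t => exp (-t) / t) (Ioi x) := by
  refine ((exp_neg_integrableOn_Ioi x one_pos).mul_const x⁻¹).mono'
    (by fun_prop : Measurable fun t => exp (-t) / t).aestronglyMeasurable ?_
  filter_upwards [ae_restrict_mem measurableSet_Ioi] with t ht
  rw [norm_div, Real.norm_of_nonneg (exp_pos _).le, Real.norm_of_nonneg (hx.trans ht).le,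
    neg_one_mul, div_eq_mul_inv]
  gcongr
  exact ht.le

theorem E1_eq_sub_intervalIntegral {x : ℝ} (hx : 0 < x) :
    E1 x = E1 1 - ∫ t in (1 : ℝ)..x, exp (-t) / t := by
  rw [← intervalIntegral.integral_Ioi_sub_Ioi' (integrableOn_exp_neg_div_Ioi one_pos)
    (integrableOn_exp_neg_div_Ioi hx), E1, E1, sub_sub_cancel]

theorem hasDerivAt_E1 {x : ℝ} (hx : 0 < x) : HasDerivAt E1 (-(exp (-x) / x)) x := by
  have hcont : ContinuousOn (fun t => exp (-t) / t) (Ioi 0) :=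
    (continuousOn_exp.comp continuousOn_neg (mapsTo_univ _ _)).div continuousOn_id
      fun t ht => ht.ne'
  have hint : IntervalIntegrable (fun t => exp (-t) / t) volume 1 x := by
    refine (hcont.mono fun t ht => ?_).intervalIntegrable
    rcases mem_uIcc.1 ht with h | h
    exacts [one_pos.trans_le h.1, hx.trans_le h.1]
  have hFTC := intervalIntegral.integral_hasDerivAt_right hint
    (hcont.stronglyMeasurableAtFilter isOpen_Ioi x hx) (hcont.continuousAt (Ioi_mem_nhds hx))
  refine (hFTC.const_sub (E1 1)).congr_of_eventuallyEq ?_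
  filter_upwards [Ioi_mem_nhds hx] with y hy using E1_eq_sub_intervalIntegral hy

theorem hasDerivAt_exp_mul_E1 {y : ℝ} (hy : 0 < y) :
    HasDerivAt (fun y => exp y * E1 y) (exp y * E1 y - y⁻¹) y := by
  refine ((hasDerivAt_exp y).mul (hasDerivAt_E1 hy)).congr_deriv ?_
  rw [exp_neg]
  field_simp
  ring

theorem hasDerivAt_one_div_one_sub {x : ℝ} (hx : x ≠ 1) :
    HasDerivAt (fun x => 1 / (1 - x)) (1 / (1 - x) ^ 2) x := by
  simpa using ((hasDerivAt_id' x).const_sub 1).fun_inv (sub_ne_zero.2 hx.symm)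

theorem hasDerivAt_exp_mul_E1_one_div_one_sub {x : ℝ} (hx : x < 1) :
    HasDerivAt (fun x => exp (1 / (1 - x)) * E1 (1 / (1 - x)))
      ((exp (1 / (1 - x)) * E1 (1 / (1 - x)) - (1 - x)) / (1 - x) ^ 2) x := by
  have h : 0 < 1 - x := sub_pos.2 hx
  refine ((hasDerivAt_exp_mul_E1 (one_div_pos.2 h)).comp x
    (hasDerivAt_one_div_one_sub hx.ne)).congr_deriv ?_
  field_simp

theorem hasDerivAt_exp_div_one_sub {x : ℝ} (hx : x < 1) :
    HasDerivAt (fun x => exp (x / (1 - x))) (exp (x / (1 - x)) / (1 - x) ^ 2) x := by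
  have h : 1 - x ≠ 0 := (sub_pos.2 hx).ne'
  refine (((hasDerivAt_id' x).fun_div ((hasDerivAt_id' x).const_sub 1) h).exp).congr_deriv ?_
  field_simp
  ring

theorem one_sub_sq_mul_deriv_eq (c : ℝ) {x : ℝ} (hx : x < 1) :
    (1 - x) ^ 2 * deriv (fun x => exp (1 / (1 - x)) * E1 (1 / (1 - x)) - c * exp (x / (1 - x))) x
      = exp (1 / (1 - x)) * E1 (1 / (1 - x)) - c * exp (x / (1 - x)) - (1 - x) := by
  have h : 1 - x ≠ 0 := (sub_pos.2 hx).ne'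
  rw [((hasDerivAt_exp_mul_E1_one_div_one_sub hx).fun_sub
    ((hasDerivAt_exp_div_one_sub hx).const_mul c)).deriv]
  field_simp
  ring

theorem Real.mem_eball_zero_one_iff {x : ℝ} : x ∈ Metric.eball (0 : ℝ) 1 ↔ |x| < 1 := by
  rw [← ENNReal.ofReal_one, Metric.eball_ofReal, mem_ball_zero_iff, Real.norm_eq_abs]

def HasPowerSeriesOnUnitBall (f : ℝ → ℝ) (p : ℝ⟦X⟧) : Prop :=
  ∀ x : ℝ, |x| < 1 → HasSum (fun n => coeff n p * x ^ n) (f x)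

namespace HasPowerSeriesOnUnitBall

variable {f g : ℝ → ℝ} {p q : ℝ⟦X⟧}

theorem congr (hf : HasPowerSeriesOnUnitBall f p) (hfg : ∀ x, |x| < 1 → f x = g x) :
    HasPowerSeriesOnUnitBall g p :=
  fun x hx => hfg x hx ▸ hf x hx

theorem const (a : ℝ) : HasPowerSeriesOnUnitBall (fun _ => a) (C a) := by
  intro x _
  convert hasSum_ite_eq 0 a using 2 with n
  rcases eq_or_ne n 0 with rfl | hn <;> simp [coeff_C, *]

theorem one : HasPowerSeriesOnUnitBall (fun _ => 1) 1 := by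
  simpa using const 1

theorem X : HasPowerSeriesOnUnitBall (fun x => x) X := by
  intro x _
  convert hasSum_ite_eq 1 x using 2 with n
  rcases eq_or_ne n 1 with rfl | hn <;> simp [coeff_X, *]

theorem sub (hf : HasPowerSeriesOnUnitBall f p) (hg : HasPowerSeriesOnUnitBall g q) :
    HasPowerSeriesOnUnitBall (fun x => f x - g x) (p - q) := by
  intro x hx
  simpa only [map_sub, sub_mul] using (hf x hx).sub (hg x hx)

theorem mul (hf : HasPowerSeriesOnUnitBall f p) (hg : HasPowerSeriesOnUnitBall g q) :
    HasPowerSeriesOnUnitBall (fun x => f x * g x) (p * q) := by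
  intro x hx
  have hf' := (hf x hx).summable.norm
  have hg' := (hg x hx).summable.norm
  have cauchy := (summable_norm_sum_mul_antidiagonal_of_summable_norm hf' hg').of_norm.hasSum
  rw [← tsum_mul_tsum_eq_tsum_sum_antidiagonal_of_summable_norm hf' hg', (hf x hx).tsum_eq,
    (hg x hx).tsum_eq] at cauchy
  refine cauchy.congr_fun fun n => ?_
  rw [coeff_mul, Finset.sum_mul]
  refine Finset.sum_congr rfl fun ij hij => ?_
  rw [← Finset.HasAntidiagonal.mem_antidiagonal.1 hij, pow_add]
  ring

theorem coeff_zero_eq (hf : HasPowerSeriesOnUnitBall f p) : coeff 0 p = f 0 := by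
  simpa using (hasSum_single (f := fun n => coeff n p * (0 : ℝ) ^ n) 0 fun n hn => by
    simp [hn]).unique (hf 0 (by simp))

theorem hasFPowerSeriesOnBall (hf : HasPowerSeriesOnUnitBall f p) :
    HasFPowerSeriesOnBall f (.ofScalars ℝ fun n => coeff n p) 0 1 where
  r_le := by
    refine ENNReal.le_of_forall_nnreal_lt fun r hr => FormalMultilinearSeries.le_radius_of_summable_norm _ ?_
    have hr1 : |(r : ℝ)| < 1 := by
      rw [NNReal.abs_eq]
      exact_mod_cast hr
    simpa [FormalMultilinearSeries.ofScalars_norm] using (hf r hr1).summable.norm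
  r_pos := one_pos
  hasSum {y} hy := by
    simpa [FormalMultilinearSeries.ofScalars_apply_eq, mul_comm] using hf y (Real.mem_eball_zero_one_iff.1 hy)

theorem unique (hp : HasPowerSeriesOnUnitBall f p) (hq : HasPowerSeriesOnUnitBall f q) :
    p = q := by
  ext n
  have := hp.hasFPowerSeriesOnBall.hasFPowerSeriesAt.eq_formalMultilinearSeries
    hq.hasFPowerSeriesOnBall.hasFPowerSeriesAt
  exact congrFun (FormalMultilinearSeries.ofScalars_series_injective ℝ ℝ this) n

theorem deriv (hf : HasPowerSeriesOnUnitBall f p) :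
    HasPowerSeriesOnUnitBall (deriv f) (d⁄dX ℝ p) := by
  intro x hx
  have := (hf.hasFPowerSeriesOnBall.fderiv.hasSum (Real.mem_eball_zero_one_iff.2 hx)).mapL
    (ContinuousLinearMap.apply ℝ ℝ 1)
  simp only [zero_add, ContinuousLinearMap.apply_apply,
    FormalMultilinearSeries.apply_eq_pow_smul_coeff] at this
  refine this.congr_fun fun n => ?_
  simp [coeff_derivative, FormalMultilinearSeries.coeff_ofScalars, mul_comm]

end HasPowerSeriesOnUnitBall

theorem coeff_recurrence_of_ode {P : ℝ⟦X⟧}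
    (h : (1 - X) * (1 - X) * d⁄dX ℝ P = P - (1 - X)) :
    coeff 1 P = coeff 0 P - 1 ∧ ∀ n : ℕ, ((n : ℝ) + 2) * coeff (n + 2) P
      = (2 * n + 3) * coeff (n + 1) P - n * coeff n P + if n = 0 then 1 else 0 := by
  have expand : (1 - X) * (1 - X) * d⁄dX ℝ P
      = d⁄dX ℝ P - X * d⁄dX ℝ P - X * d⁄dX ℝ P + X * (X * d⁄dX ℝ P) := by ring
  rw [expand] at h
  refine ⟨?_, fun n => ?_⟩
  · have := congrArg (coeff 0) h
    simp only [map_sub, map_add, coeff_zero_X_mul, coeff_derivative, coeff_one, coeff_X] at this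
    norm_num at this ⊢
    linarith
  · have := congrArg (coeff (n + 1)) h
    rcases n with _ | n <;> simp [coeff_derivative, coeff_X] at this <;> push_cast <;> linarith

theorem neg_recurrence {u : ℕ → ℝ} (h2 : (2 : ℝ) * u 2 - 3 * u 1 + 0 * u 0 = -1)
    (hrec : ∀ n : ℕ, 3 ≤ n →
      (n : ℝ) * u n - (2 * n - 1) * u (n - 1) + ((n : ℝ) - 2) * u (n - 2) = 0) (n : ℕ) :
    ((n : ℝ) + 2) * -u (n + 2) = (2 * n + 3) * -u (n + 1) - n * -u n
      + if n = 0 then 1 else 0 := by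
  rcases n with _ | n
  · norm_num
    linarith
  · have := hrec (n + 3) (by omega)
    simp only [show n + 3 - 2 = n + 1 by omega] at this
    push_cast at this ⊢
    linarith

theorem eq_of_second_order_recurrence {u v : ℕ → ℝ} (p : ℕ → ℝ) (g : ℕ → ℝ → ℝ → ℝ)
    (hp : ∀ n, p n ≠ 0) (h0 : u 0 = v 0) (h1 : u 1 = v 1)
    (hu : ∀ n, p n * u (n + 2) = g n (u n) (u (n + 1)))
    (hv : ∀ n, p n * v (n + 2) = g n (v n) (v (n + 1))) : u = v := by
  have key : ∀ n, u n = v n ∧ u (n + 1) = v (n + 1) := by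
    intro n
    induction n with
    | zero => exact ⟨h0, h1⟩
    | succ n ih =>
      refine ⟨ih.2, mul_left_cancel₀ (hp n) ?_⟩
      rw [hu, hv, ih.1, ih.2]
  exact funext fun n => (key n).1

/-- For `n ≥ 1`, `bₙ = aₙ·G - aₙ'`, where `G = e·E₁(1)` is the Euler–Gompertz
constant, `aₙ = [zⁿ] exp(z/(1-z))`, and `aₙ'` satisfies `a₀' = 0`, `a₁' = 1`, and
`n·aₙ' - (2n-1)·aₙ₋₁' + (n-2)·aₙ₋₂'` equals `-1` for `n = 2` and `0` for `n ≥ 3`. -/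
theorem stmt_10 (a b a' : ℕ → ℝ)
    (ha : ∀ x : ℝ, |x| < 1 → HasSum (fun n => a n * x ^ n) (Real.exp (x / (1 - x))))
    (hb : ∀ x : ℝ, |x| < 1 → HasSum (fun n => b n * x ^ n)
      (Real.exp (1 / (1 - x)) * E1 (1 / (1 - x))))
    (ha'0 : a' 0 = 0) (ha'1 : a' 1 = 1)
    (ha'2 : (2 : ℝ) * a' 2 - 3 * a' 1 + 0 * a' 0 = -1)
    (ha'rec : ∀ n : ℕ, 3 ≤ n →
      (n : ℝ) * a' n - (2 * n - 1) * a' (n - 1) + ((n : ℝ) - 2) * a' (n - 2) = 0) :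
    ∀ n : ℕ, 1 ≤ n → b n = a n * (Real.exp 1 * E1 1) - a' n := by
  set G := exp 1 * E1 1
  set P : ℝ⟦X⟧ := mk b - C G * mk a
  have hP : HasPowerSeriesOnUnitBall
      (fun x => exp (1 / (1 - x)) * E1 (1 / (1 - x)) - G * exp (x / (1 - x))) P :=
    HasPowerSeriesOnUnitBall.sub (fun x hx => by simpa using hb x hx)
      ((HasPowerSeriesOnUnitBall.const G).mul fun x hx => by simpa using ha x hx)
  have hode : (1 - X) * (1 - X) * d⁄dX ℝ P = P - (1 - X) := by
    have hL := HasPowerSeriesOnUnitBall.one.sub HasPowerSeriesOnUnitBall.X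
    refine ((hL.mul hL).mul hP.deriv).unique ((hP.sub hL).congr fun x hx => ?_)
    rw [← one_sub_sq_mul_deriv_eq G (abs_lt.1 hx).2]
    ring
  obtain ⟨h1, hrec⟩ := coeff_recurrence_of_ode hode
  have h0 : coeff 0 P = 0 := by simp [hP.coeff_zero_eq, G]
  have key := eq_of_second_order_recurrence (u := fun n => coeff n P) (v := fun n => -a' n)
    (fun n => n + 2) (fun n x y => (2 * n + 3) * y - n * x + if n = 0 then 1 else 0)
    (fun n => by positivity) (by simp [h0, ha'0]) (by simp [h1, h0, ha'1]) hrec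
    (neg_recurrence ha'2 ha'rec)
  intro n _
  have := congrFun key n
  simp only [P, map_sub, coeff_mk, coeff_C_mul] at this
  linarith
end
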